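/- arXiv:1102.5314 — 3 statements merged into one kernel-verified Lean document; each statement's English description precedes it below -/
import Mathlib

section
/- For constants w > 0, c > 0, b > 0, and multipliers μ_s = λ_s+λ_t > 0, μ_r = λ_r+λ_t > 0 with c/μ_s ≥ b/μ_r, the function h(V^s, V^r) = (w/2)·log₂(1 + c·V^s/μ_s + b·V^r/μ_r) − V^s − V^r over V^s, V^r ≥ 0 attains its maximum at a point with V^r = 0; specifically V^s* = max(w/(2 ln 2) − μ_s/c, 0) and V^r* = 0 is a global maximizer. -/
theorem stmt_9 (w c b μs μr : ℝ)
    (hw : 0 < w) (hc : 0 < c) (hb : 0 < b) (hμs : 0 < μs) (hμr : 0 < μr)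
    (hcond : b / μr ≤ c / μs)
    (h : ℝ → ℝ → ℝ)
    (hh : ∀ Vs Vr, h Vs Vr =
      (w / 2) * (Real.log (1 + (c / μs) * Vs + (b / μr) * Vr) / Real.log 2) - Vs - Vr) :
    ∀ Vs Vr : ℝ, 0 ≤ Vs → 0 ≤ Vr →
      h Vs Vr ≤ h (max (w / (2 * Real.log 2) - μs / c) 0) 0 := by
  intro Vs Vr hVs hVr
  have hL : (0:ℝ) < Real.log 2 := Real.log_pos (by norm_num)
  set L := Real.log 2 with hLdef
  set k := w / (2 * L) with hk
  have hkpos : 0 < k := by positivity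
  set a := c / μs with ha
  set a' := b / μr with ha'
  have hapos : 0 < a := by positivity
  have ha'pos : 0 < a' := by positivity
  set t := Vs + Vr with ht
  set T := max (k - μs / c) 0 with hT
  have hTnn : 0 ≤ T := le_max_right _ _
  have h1 : (0:ℝ) < 1 + a * Vs + a' * Vr := by positivity
  have h2 : (0:ℝ) < 1 + a * t := by positivity
  have h3 : (0:ℝ) < 1 + a * T := by positivity
  rw [hh, hh]
  have hrw : ∀ x : ℝ, (w / 2) * (Real.log x / L) = k * Real.log x := by
    intro x; rw [hk]; field_simp
  rw [hrw, hrw]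
  have stepA : Real.log (1 + a * Vs + a' * Vr) ≤ Real.log (1 + a * t) := by
    apply Real.log_le_log h1
    have := mul_le_mul_of_nonneg_right hcond hVr
    rw [ht]; nlinarith
  have hlog : Real.log (1 + a * t) - Real.log (1 + a * T) ≤ (a * (t - T)) / (1 + a * T) := by
    rw [← Real.log_div (ne_of_gt h2) (ne_of_gt h3)]
    calc Real.log ((1 + a * t) / (1 + a * T))
        ≤ (1 + a * t) / (1 + a * T) - 1 :=
          Real.log_le_sub_one_of_pos (by positivity)
      _ = (a * (t - T)) / (1 + a * T) := by field_simp; ring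
  have key : k * (a * (t - T)) / (1 + a * T) ≤ t - T := by
    rcases le_or_gt (μs / c) k with hcase | hcase
    · have hTeq : T = k - μs / c := by rw [hT, max_eq_left (by linarith)]
      have heq : 1 + a * T = a * k := by
        rw [hTeq, ha]; field_simp; ring
      rw [heq]
      have : k * (a * (t - T)) / (a * k) = t - T := by field_simp
      rw [this]
    · have hTeq : T = 0 := by rw [hT, max_eq_right (by linarith)]
      have hka : k * a < 1 := by
        rw [ha]
        have : k * (c / μs) < (μs / c) * (c / μs) := by
          apply mul_lt_mul_of_pos_right hcase (by positivity)
        have hone : (μs / c) * (c / μs) = 1 := by field_simp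
        linarith
      have htnn : 0 ≤ t := by rw [ht]; linarith
      rw [hTeq]
      simp only [mul_zero, add_zero, sub_zero]
      rw [div_one]
      nlinarith
  have hklog : k * Real.log (1 + a * t) - k * Real.log (1 + a * T) ≤ t - T := by
    have := mul_le_mul_of_nonneg_left hlog hkpos.le
    rw [mul_sub] at this
    calc k * Real.log (1 + a * t) - k * Real.log (1 + a * T)
        ≤ k * ((a * (t - T)) / (1 + a * T)) := this
      _ = k * (a * (t - T)) / (1 + a * T) := by ring
      _ ≤ t - T := key
  have stepA' := mul_le_mul_of_nonneg_left stepA hkpos.le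
  have hfin : 1 + a * T + a' * 0 = 1 + a * T := by ring
  rw [hfin]
  have hteq : t = Vs + Vr := ht
  linarith
end

section
/- If (w/2)·log₂(1 + a·P₁) + (λ_s+λ_t)·P₂ ≥ (w/2)·log₂(1 + c·P₂), where P₁ ≤ min(P_s,P_t) and P₂ = max(w/(α(λ_s+λ_t)) − 1/c, 0), with α = 2 ln 2, then 4 + 4a·min(P_s,P_t) ≥ w·c/(α(λ_s+λ_t)), and consequently λ_s + λ_t ≥ w·c/(4α·(a·min(P_s,P_t) + 1)). -/
/-!
Write `L = λ_s + λ_t` and `X = w c / (α L)`; both conclusions say `X ≤ 4 (1 + a min(P_s, P_t))`,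
which is clear when `X ≤ 1`. Otherwise `P₂ = w / (α L) - 1 / c > 0` and `1 + c P₂ = X`, while the
price term satisfies `L P₂ ≤ w / α = (w / 2) / ln 2`. Dividing the hypothesis by `w / (2 ln 2)`
leaves `ln X ≤ ln (1 + a P₁) + 1`, i.e. `X ≤ e (1 + a P₁) ≤ 4 (1 + a min(P_s, P_t))`.
-/

open Real

lemma log_le_log_add_one_of_half_mul_logb_le {w y z : ℝ} (hw : 0 < w)
    (h : w / 2 * (log y / log 2) ≤ w / 2 * (log z / log 2) + w / (2 * log 2)) :
    log y ≤ log z + 1 := by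
  have hscale : 0 < w / (2 * log 2) := by positivity
  refine le_of_mul_le_mul_left ?_ hscale
  calc w / (2 * log 2) * log y = w / 2 * (log y / log 2) := by ring
    _ ≤ w / 2 * (log z / log 2) + w / (2 * log 2) := h
    _ = w / (2 * log 2) * (log z + 1) := by ring

lemma le_exp_one_mul_of_log_le_log_add_one {y z : ℝ} (hy : 0 < y) (hz : 0 < z)
    (h : log y ≤ log z + 1) : y ≤ exp 1 * z := by
  rw [log_le_iff_le_exp hy, exp_add, exp_log hz, mul_comm] at h
  exact h

theorem stmt_12_general (w a c Ps Pt lamS lamT P₁ P₂ : ℝ)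
    (hw : 0 < w) (ha : 0 < a) (hc : 0 < c)
    (hst : 0 < lamS + lamT)
    (α : ℝ) (hα : α = 2 * Real.log 2)
    (hP₁ : 0 ≤ P₁) (hP₁' : P₁ ≤ min Ps Pt)
    (hP₂ : P₂ = max (w / (α * (lamS + lamT)) - 1 / c) 0)
    (h : (w / 2) * (Real.log (1 + c * P₂) / Real.log 2) ≤
         (w / 2) * (Real.log (1 + a * P₁) / Real.log 2) + (lamS + lamT) * P₂) :
    4 + 4 * a * min Ps Pt ≥ w * c / (α * (lamS + lamT)) ∧
    lamS + lamT ≥ w * c / (4 * α * (a * min Ps Pt + 1)) := by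
  set L := lamS + lamT
  set m := min Ps Pt
  have hα₀ : 0 < α := by rw [hα]; have := log_pos one_lt_two; positivity
  have ham : 0 ≤ a * m := mul_nonneg ha.le (hP₁.trans hP₁')
  have key : w * c / (α * L) ≤ 4 * (1 + a * m) := by
    rcases le_or_gt (w * c / (α * L)) 1 with hle | hgt
    · linarith
    have hP₂eq : P₂ = w / (α * L) - 1 / c := by
      refine hP₂.trans (max_eq_left ?_)
      rw [sub_nonneg, div_le_div_iff₀ hc (by positivity)]
      rw [one_lt_div (by positivity)] at hgt
      linarith
    have hrate : 1 + c * P₂ = w * c / (α * L) := by rw [hP₂eq]; field_simp; ring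
    have hprice : L * P₂ ≤ w / (2 * log 2) := by
      have : L * P₂ = w / α - L / c := by rw [hP₂eq]; field_simp
      rw [this, ← hα]
      linarith [div_pos hst hc]
    have hlog : log (w * c / (α * L)) ≤ log (1 + a * P₁) + 1 :=
      log_le_log_add_one_of_half_mul_logb_le hw (by rw [← hrate]; linarith)
    calc w * c / (α * L) ≤ exp 1 * (1 + a * P₁) :=
          le_exp_one_mul_of_log_le_log_add_one (by positivity) (by positivity) hlog
      _ ≤ 4 * (1 + a * m) := by
          gcongr
          linarith [exp_one_lt_d9]
  refine ⟨by linarith, ?_⟩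
  rw [ge_iff_le, div_le_iff₀ (by positivity)]
  linarith [(div_le_iff₀ (by positivity)).1 key]

theorem stmt_12 (w a c Ps Pt lamS lamT P₁ P₂ : ℝ)
    (hw : 0 < w) (ha : 0 < a) (hc : 0 < c)
    (hlamS : 0 ≤ lamS) (hlamT : 0 ≤ lamT) (hst : 0 < lamS + lamT)
    (hPs : 0 < Ps) (hPt : 0 < Pt)
    (α : ℝ) (hα : α = 2 * Real.log 2)
    (hP₁ : 0 ≤ P₁) (hP₁' : P₁ ≤ min Ps Pt)
    (hP₂ : P₂ = max (w / (α * (lamS + lamT)) - 1 / c) 0)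
    (h : (w / 2) * (Real.log (1 + c * P₂) / Real.log 2) ≤
         (w / 2) * (Real.log (1 + a * P₁) / Real.log 2) + (lamS + lamT) * P₂) :
    4 + 4 * a * min Ps Pt ≥ w * c / (α * (lamS + lamT)) ∧
    lamS + lamT ≥ w * c / (4 * α * (a * min Ps Pt + 1)) :=
  stmt_12_general w a c Ps Pt lamS lamT P₁ P₂ hw ha hc hst α hα hP₁ hP₁' hP₂ h
end

section
/- For AF relaying, removing the '1' from the denominator yields an upper bound: for all a, b, c, P^s, P^r ≥ 0 with a·P^s + b·P^r > 0, (1/2)·log(1 + (a·b·P^r·P^s)/(1 + a·P^s + b·P^r) + c·P^s) ≤ (1/2)·log(1 + (a·b·P^r·P^s)/(a·P^s + b·P^r) + c·P^s), and the right-hand side, as a function of (P^s, P^r), is concave on the open positive quadrant. -/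
/-!
Dropping the `1` from the denominator enlarges the relay term, and `log` is monotone.
For concavity, `x * y / (x + y)` is concave on the positive quadrant; the relay term is this
function after the diagonal rescaling `(Ps, Pr) ↦ (a Ps, b Pr)`, adding `1 + c Ps` keeps it
concave and positive, and the logarithm of a positive concave function is concave.
-/

theorem ConcaveOn.log {E : Type*} [AddCommMonoid E] [Module ℝ E] {s : Set E} {f : E → ℝ}
    (hf : ConcaveOn ℝ s f) (hpos : ∀ x ∈ s, 0 < f x) : ConcaveOn ℝ s (fun x => Real.log (f x)) :=
  ⟨hf.1, fun x hx y hy _ _ ha hb hab =>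
    (strictConcaveOn_log_Ioi.concaveOn.2 (hpos x hx) (hpos y hy) ha hb hab).trans <|
      Real.log_le_log (Set.mem_Ioi.1 (convex_Ioi 0 (hpos x hx) (hpos y hy) ha hb hab))
        (hf.2 hx hy ha hb hab)⟩

theorem convex_positiveQuadrant : Convex ℝ {p : ℝ × ℝ | 0 < p.1 ∧ 0 < p.2} :=
  (convex_Ioi 0).prod (convex_Ioi 0)

theorem concaveOn_mul_div_add :
    ConcaveOn ℝ {p : ℝ × ℝ | 0 < p.1 ∧ 0 < p.2} (fun p => p.1 * p.2 / (p.1 + p.2)) := by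
  refine ⟨convex_positiveQuadrant, ?_⟩
  rintro ⟨x₁, x₂⟩ ⟨hx₁, hx₂⟩ ⟨y₁, y₂⟩ ⟨hy₁, hy₂⟩ s t hs ht hst
  simp only [Prod.smul_mk, Prod.mk_add_mk, smul_eq_mul]
  have hz : 0 < s * x₁ + t * y₁ + (s * x₂ + t * y₂) := by
    have h := convex_Ioi (0 : ℝ) (add_pos hx₁ hx₂) (add_pos hy₁ hy₂) hs ht hst
    simp only [Set.mem_Ioi, smul_eq_mul] at h
    linarith
  have hdefect : (s * x₁ + t * y₁) * (s * x₂ + t * y₂) / (s * x₁ + t * y₁ + (s * x₂ + t * y₂))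
      - (s * (x₁ * x₂ / (x₁ + x₂)) + t * (y₁ * y₂ / (y₁ + y₂)))
      = s * t * (x₁ * y₂ - x₂ * y₁) ^ 2
        / ((x₁ + x₂) * (y₁ + y₂) * (s * x₁ + t * y₁ + (s * x₂ + t * y₂))) := by
    obtain rfl : t = 1 - s := by linarith
    field_simp
    ring
  have hdefect_nonneg : 0 ≤ s * t * (x₁ * y₂ - x₂ * y₁) ^ 2
        / ((x₁ + x₂) * (y₁ + y₂) * (s * x₁ + t * y₁ + (s * x₂ + t * y₂))) := by positivity
  linarith

theorem concaveOn_mul_mul_div_add {a b : ℝ} (ha : 0 < a) (hb : 0 < b) :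
    ConcaveOn ℝ {p : ℝ × ℝ | 0 < p.1 ∧ 0 < p.2}
      (fun p => a * b * p.2 * p.1 / (a * p.1 + b * p.2)) := by
  have hpre : (LinearMap.prodMap (a • LinearMap.id) (b • LinearMap.id) : ℝ × ℝ →ₗ[ℝ] ℝ × ℝ) ⁻¹'
      {p : ℝ × ℝ | 0 < p.1 ∧ 0 < p.2} = {p : ℝ × ℝ | 0 < p.1 ∧ 0 < p.2} := by
    ext p
    simp [mul_pos_iff_of_pos_left ha, mul_pos_iff_of_pos_left hb]
  have h := concaveOn_mul_div_add.comp_linearMap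
    (LinearMap.prodMap (a • LinearMap.id) (b • LinearMap.id))
  rw [hpre] at h
  refine h.congr fun p _ => ?_
  simp only [Function.comp_apply, LinearMap.prodMap_apply, LinearMap.smul_apply,
    LinearMap.id_apply, smul_eq_mul]
  ring

theorem stmt_16 (a b c : ℝ) (ha : 0 < a) (hb : 0 < b) (hc : 0 ≤ c) :
    (∀ Ps Pr : ℝ, 0 < Ps → 0 < Pr →
      (1 / 2) * Real.log (1 + a * b * Pr * Ps / (1 + a * Ps + b * Pr) + c * Ps) ≤
      (1 / 2) * Real.log (1 + a * b * Pr * Ps / (a * Ps + b * Pr) + c * Ps)) ∧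
    ConcaveOn ℝ {p : ℝ × ℝ | 0 < p.1 ∧ 0 < p.2}
      (fun p : ℝ × ℝ =>
        (1 / 2) * Real.log (1 + a * b * p.2 * p.1 / (a * p.1 + b * p.2) + c * p.1)) := by
  refine ⟨fun Ps Pr hPs hPr => ?_, ?_⟩
  · gcongr
    linarith
  · have hinner : ConcaveOn ℝ {p : ℝ × ℝ | 0 < p.1 ∧ 0 < p.2}
        (fun p : ℝ × ℝ => 1 + a * b * p.2 * p.1 / (a * p.1 + b * p.2) + c * p.1) := by
      refine (((concaveOn_mul_mul_div_add ha hb).add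
        ((c • LinearMap.fst ℝ ℝ ℝ).concaveOn convex_positiveQuadrant)).add_const 1).congr
        fun p _ => ?_
      simp only [Pi.add_apply, LinearMap.smul_apply, LinearMap.fst_apply, smul_eq_mul]
      ring
    have hpos : ∀ p ∈ {p : ℝ × ℝ | 0 < p.1 ∧ 0 < p.2},
        0 < 1 + a * b * p.2 * p.1 / (a * p.1 + b * p.2) + c * p.1 := by
      rintro p ⟨hp₁, hp₂⟩
      positivity
    exact (hinner.log hpos).smul (by norm_num : (0 : ℝ) ≤ 1 / 2)
end
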